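/- Let d, m ≥ 1 be integers and let π be a non-crossing ε_d-partition of [2dm]. Then the number of non-crossing ε_d-partitions σ of [2dm] with σ ≤ π is at most (3e)^{2m}, where e = exp(1) is Euler's number. -/

import Mathlib

open Finset

/-- Two elements lie in the same block of the partition `P`. -/
def SameBlock {N : ℕ} (P : Finpartition (univ : Finset (Fin N))) (s t : Fin N) : Prop :=
  ∃ B ∈ P.parts, s ∈ B ∧ t ∈ B

/-- A partition of `[N]` is non-crossing if there are no `s₁ < t₁ < s₂ < t₂` with
`s₁ ∼ s₂`, `t₁ ∼ t₂` but `s₁ ≁ t₁`. -/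
def NonCrossing {N : ℕ} (P : Finpartition (univ : Finset (Fin N))) : Prop :=
  ∀ s₁ t₁ s₂ t₂ : Fin N, s₁ < t₁ → t₁ < s₂ → s₂ < t₂ →
    SameBlock P s₁ s₂ → SameBlock P t₁ t₂ → SameBlock P s₁ t₁

/-- Every block has even cardinality. -/
def EvenPartition {N : ℕ} (P : Finpartition (univ : Finset (Fin N))) : Prop :=
  ∀ B ∈ P.parts, Even B.card

/-- The (two-valued) function `ε` alternates along each block of `P`, listed in
increasing order. -/
def Alternating {N : ℕ} (ε : Fin N → Bool) (P : Finpartition (univ : Finset (Fin N))) : Prop :=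
  ∀ B ∈ P.parts, (Finset.sort B (· ≤ ·)).Chain' (fun a b => ε a ≠ ε b)

/-- An `ε`-partition: an even partition on each block of which `ε` alternates. -/
def EpsPartition {N : ℕ} (ε : Fin N → Bool) (P : Finpartition (univ : Finset (Fin N))) : Prop :=
  EvenPartition P ∧ Alternating ε P

/-- A pairing: every block has exactly two elements. -/
def IsPairing {N : ℕ} (P : Finpartition (univ : Finset (Fin N))) : Prop :=
  ∀ B ∈ P.parts, B.card = 2

/-- `σ` refines `π`: every block of `σ` is contained in a block of `π` (i.e. `σ ≤ π`). -/
def Refines {N : ℕ} (σ π : Finpartition (univ : Finset (Fin N))) : Prop :=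
  ∀ B ∈ σ.parts, ∃ C ∈ π.parts, B ⊆ C

/-- The pattern `ε_d = (1^d ∗^d)^m` on `[2dm]` (0-based; `true` codes `1`, `false` codes `∗`). -/
def epsd (d m : ℕ) : Fin (2*d*m) → Bool := fun j => decide ((j : ℕ) / d % 2 = 0)

/-- `ker I ≥ π` : the function `I` is constant on every block of `π`. -/
def KerGe {N : ℕ} {Λ : Type*} (π : Finpartition (univ : Finset (Fin N))) (I : Fin N → Λ) : Prop :=
  ∀ B ∈ π.parts, ∀ s ∈ B, ∀ t ∈ B, I s = I t

/-- The position `(j-1)d + l` in `[2dm]`, splitting `[2dm]` into `2m` consecutive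
segments of length `d`. -/
def seg (d m : ℕ) (j : Fin (2*m)) (l : Fin d) : Fin (2*d*m) :=
  ⟨j.1 * d + l.1, by
    have hj : j.1 + 1 ≤ 2*m := j.2
    have hl : l.1 < d := l.2
    calc j.1 * d + l.1 < j.1 * d + d := by linarith
      _ = (j.1 + 1) * d := by ring
      _ ≤ (2*m) * d := Nat.mul_le_mul hj (le_refl d)
      _ = 2*d*m := by ring⟩

/-! A non-crossing partition is determined by which points are the least and which the
greatest element of their block. If `σ ≤ π` is even, a point that is extremal in its `π`-block
keeps that status in `σ`, so `σ` is coded by two bits on each point interior to a block of `π`.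
Since `π` is non-crossing and `ε_d` alternates along its blocks while being constant on the `2m`
segments `[jd, (j+1)d)`, distinct interior points of `π` lie in distinct segments. Hence there
are at most `4 ^ (2m) ≤ (3e) ^ (2m)` such `σ`. -/

theorem List.IsChain.exists_rel_mem_Icc {α : Type*} [LinearOrder α] {R : α → α → Prop} :
    ∀ {L : List α}, L.Pairwise (· < ·) → L.IsChain R → ∀ {x y : α}, x ∈ L → y ∈ L → x < y →
      ∃ a ∈ Set.Icc x y, ∃ b ∈ Set.Icc x y, R a b
  | [a], _, _, x, y, hx, hy, hxy => by simp_all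
  | a :: b :: l, hL, hR, x, y, hx, hy, hxy => by
    rw [List.pairwise_cons] at hL
    rw [List.isChain_cons_cons] at hR
    have hy' : y ∈ b :: l := by
      rcases List.mem_cons.1 hy with rfl | hy
      · rcases List.mem_cons.1 hx with rfl | hx
        · exact absurd hxy (lt_irrefl _)
        · exact absurd (hL.1 x hx) hxy.not_gt
      · exact hy
    rcases List.mem_cons.1 hx with rfl | hx
    · have hby : b ≤ y := by
        rcases List.mem_cons.1 hy' with rfl | hy'
        · exact le_rfl
        · exact ((List.pairwise_cons.1 hL.2).1 y hy').le
      exact ⟨x, ⟨le_rfl, hxy.le⟩, b, ⟨(hL.1 b (by simp)).le, hby⟩, hR.1⟩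
    · exact exists_rel_mem_Icc hL.2 hR.2 hx hy' hxy

theorem Finpartition.ext_part {α : Type*} [DecidableEq α] {s : Finset α} {P Q : Finpartition s}
    (h : ∀ a, P.part a = Q.part a) : P = Q := by
  ext B
  constructor <;> intro hB
  · obtain ⟨a, ha⟩ := P.nonempty_of_mem_parts hB
    rw [← P.part_eq_of_mem hB ha, h]
    exact Q.part_mem.2 (P.le hB ha)
  · obtain ⟨a, ha⟩ := Q.nonempty_of_mem_parts hB
    rw [← Q.part_eq_of_mem hB ha, ← h]
    exact P.part_mem.2 (Q.le hB ha)

section Blocks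

variable {N : ℕ}

def IsBlockMin (P : Finpartition (univ : Finset (Fin N))) (x : Fin N) : Prop :=
  ∀ y ∈ P.part x, x ≤ y

def IsBlockMax (P : Finpartition (univ : Finset (Fin N))) (x : Fin N) : Prop :=
  ∀ y ∈ P.part x, y ≤ x

def IsBlockPred (P : Finpartition (univ : Finset (Fin N))) (p y : Fin N) : Prop :=
  p ∈ P.part y ∧ p < y ∧ ∀ z ∈ P.part y, z < y → z ≤ p

def blockInterior (P : Finpartition (univ : Finset (Fin N))) : Set (Fin N) :=
  {x | ¬ IsBlockMin P x ∧ ¬ IsBlockMax P x}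

variable {P : Finpartition (univ : Finset (Fin N))} {x y p q : Fin N}

lemma self_mem_part (P : Finpartition (univ : Finset (Fin N))) (x : Fin N) : x ∈ P.part x :=
  P.mem_part (mem_univ x)

lemma part_eq_of_mem_part (h : y ∈ P.part x) : P.part y = P.part x :=
  (P.mem_part_iff_part_eq_part (mem_univ y) (mem_univ x)).1 h

lemma mem_part_comm : y ∈ P.part x ↔ x ∈ P.part y := by
  constructor <;> intro h <;> rw [part_eq_of_mem_part h] <;> exact self_mem_part P _

lemma sameBlock_iff_mem_part : SameBlock P x y ↔ y ∈ P.part x := by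
  rw [P.mem_part_iff_exists]
  exact ⟨fun ⟨B, hB, hx, hy⟩ => ⟨B, hB, hy, hx⟩, fun ⟨B, hB, hy, hx⟩ => ⟨B, hB, hx, hy⟩⟩

lemma not_isBlockMin_iff : ¬ IsBlockMin P x ↔ ∃ y ∈ P.part x, y < x := by
  simp [IsBlockMin]

lemma not_isBlockMax_iff : ¬ IsBlockMax P x ↔ ∃ y ∈ P.part x, x < y := by
  simp [IsBlockMax]

lemma exists_isBlockPred_of_not_isBlockMin (h : ¬ IsBlockMin P y) :
    ∃ p, IsBlockPred P p y := by
  classical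
  have hS : ((P.part y).filter (· < y)).Nonempty := by
    obtain ⟨z, hz, hzy⟩ := not_isBlockMin_iff.1 h
    exact ⟨z, mem_filter.2 ⟨hz, hzy⟩⟩
  obtain ⟨hp, hpy⟩ := mem_filter.1 (max'_mem _ hS)
  exact ⟨_, hp, hpy, fun z hz hzy => le_max' _ z (mem_filter.2 ⟨hz, hzy⟩)⟩

lemma exists_isBlockPred_of_not_isBlockMax (h : ¬ IsBlockMax P p) :
    ∃ q, IsBlockPred P p q := by
  classical
  have hS : ((P.part p).filter (p < ·)).Nonempty := by
    obtain ⟨z, hz, hpz⟩ := not_isBlockMax_iff.1 h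
    exact ⟨z, mem_filter.2 ⟨hz, hpz⟩⟩
  obtain ⟨hq, hpq⟩ := mem_filter.1 (min'_mem _ hS)
  refine ⟨_, mem_part_comm.1 hq, hpq, fun z hz hzq => not_lt.1 fun hpz => ?_⟩
  rw [part_eq_of_mem_part hq] at hz
  exact hzq.not_ge (min'_le _ z (mem_filter.2 ⟨hz, hpz⟩))

lemma IsBlockPred.not_isBlockMin (h : IsBlockPred P p y) : ¬ IsBlockMin P y :=
  fun hy => (hy p h.1).not_gt h.2.1

lemma IsBlockPred.not_isBlockMax (h : IsBlockPred P p y) : ¬ IsBlockMax P p :=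
  fun hp => (hp y (mem_part_comm.1 h.1)).not_gt h.2.1

lemma IsBlockPred.left_unique (h : IsBlockPred P p y) (h' : IsBlockPred P q y) : p = q :=
  le_antisymm (h'.2.2 p h.1 h.2.1) (h.2.2 q h'.1 h'.2.1)

lemma IsBlockPred.right_unique (h : IsBlockPred P p x) (h' : IsBlockPred P p y) : x = y := by
  wlog hxy : x < y generalizing x y
  · rcases (not_lt.1 hxy).lt_or_eq with hyx | rfl
    · exact (this h' h hyx).symm
    · rfl
  have hx : x ∈ P.part y := by
    rw [← part_eq_of_mem_part h'.1]
    exact mem_part_comm.1 h.1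
  exact absurd (h'.2.2 x hx hxy) h.2.1.not_ge

end Blocks

section NonCrossing

variable {N : ℕ} {σ σ' : Finpartition (univ : Finset (Fin N))}

lemma NonCrossing.not_lt_of_isBlockPred (hσ : NonCrossing σ)
    (hmin : ∀ x, IsBlockMin σ x ↔ IsBlockMin σ' x)
    (hmax : ∀ x, IsBlockMax σ x ↔ IsBlockMax σ' x)
    {y p p' : Fin N} (ih : ∀ z < y, ∀ a a', IsBlockPred σ a z → IsBlockPred σ' a' z → a = a')
    (h : IsBlockPred σ p y) (h' : IsBlockPred σ' p' y) : ¬ p < p' := by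
  intro hpp
  obtain ⟨q, hq⟩ := exists_isBlockPred_of_not_isBlockMax ((hmax p').not.2 h'.not_isBlockMax)
  rcases lt_trichotomy q y with hqy | rfl | hyq
  · obtain ⟨a', ha'⟩ :=
      exists_isBlockPred_of_not_isBlockMin ((hmin q).not.1 hq.not_isBlockMin)
    obtain rfl := ih q hqy p' a' hq ha'
    exact hqy.ne (ha'.right_unique h')
  · exact hpp.ne (h.left_unique hq)
  · have hpp' := hσ p p' y q hpp h'.2.1 hyq (sameBlock_iff_mem_part.2 (mem_part_comm.1 h.1))
      (sameBlock_iff_mem_part.2 (mem_part_comm.1 hq.1))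
    rw [sameBlock_iff_mem_part, part_eq_of_mem_part h.1] at hpp'
    exact hpp.not_ge (h.2.2 p' hpp' h'.2.1)

lemma NonCrossing.isBlockPred_eq (hσ : NonCrossing σ) (hσ' : NonCrossing σ')
    (hmin : ∀ x, IsBlockMin σ x ↔ IsBlockMin σ' x)
    (hmax : ∀ x, IsBlockMax σ x ↔ IsBlockMax σ' x)
    (y : Fin N) : ∀ p p', IsBlockPred σ p y → IsBlockPred σ' p' y → p = p' := by
  induction y using WellFoundedLT.induction with
  | _ y ih =>
    intro p p' h h'
    rcases lt_trichotomy p p' with hlt | heq | hgt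
    · exact absurd hlt (hσ.not_lt_of_isBlockPred hmin hmax ih h h')
    · exact heq
    · exact absurd hgt (hσ'.not_lt_of_isBlockPred (fun x => (hmin x).symm)
        (fun x => (hmax x).symm) (fun z hz a a' ha ha' => (ih z hz a' a ha' ha).symm) h' h)

lemma NonCrossing.isBlockPred_of_isBlockPred (hσ : NonCrossing σ) (hσ' : NonCrossing σ')
    (hmin : ∀ x, IsBlockMin σ x ↔ IsBlockMin σ' x)
    (hmax : ∀ x, IsBlockMax σ x ↔ IsBlockMax σ' x)
    {p y : Fin N} (h : IsBlockPred σ p y) : IsBlockPred σ' p y := by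
  obtain ⟨p', hp'⟩ :=
    exists_isBlockPred_of_not_isBlockMin ((hmin y).not.1 h.not_isBlockMin)
  rwa [hσ.isBlockPred_eq hσ' hmin hmax y p p' h hp']

lemma mem_part_of_forall_isBlockPred (hpred : ∀ p y, IsBlockPred σ p y → IsBlockPred σ' p y)
    (y : Fin N) : ∀ x ≤ y, y ∈ σ.part x → y ∈ σ'.part x := by
  induction y using WellFoundedLT.induction with
  | _ y ih =>
    intro x hxy hy
    rcases hxy.lt_or_eq with hxy | rfl
    · obtain ⟨p, hp⟩ := exists_isBlockPred_of_not_isBlockMin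
        (not_isBlockMin_iff.2 ⟨x, mem_part_comm.1 hy, hxy⟩)
      have hxp : x ≤ p := hp.2.2 x (mem_part_comm.1 hy) hxy
      have hp' : p ∈ σ'.part x :=
        ih p hp.2.1 x hxp (by rw [← part_eq_of_mem_part hy]; exact hp.1)
      rw [← part_eq_of_mem_part hp']
      exact mem_part_comm.1 (hpred p y hp).1
    · exact self_mem_part σ' x

lemma part_subset_of_forall_isBlockPred
    (hpred : ∀ p y, IsBlockPred σ p y → IsBlockPred σ' p y) (x : Fin N) :
    σ.part x ⊆ σ'.part x := by
  intro y hy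
  rcases le_total x y with hxy | hyx
  · exact mem_part_of_forall_isBlockPred hpred y x hxy hy
  · exact mem_part_comm.1 (mem_part_of_forall_isBlockPred hpred x y hyx (mem_part_comm.1 hy))

theorem NonCrossing.eq_of_isBlockMin_iff_of_isBlockMax_iff (hσ : NonCrossing σ)
    (hσ' : NonCrossing σ') (hmin : ∀ x, IsBlockMin σ x ↔ IsBlockMin σ' x)
    (hmax : ∀ x, IsBlockMax σ x ↔ IsBlockMax σ' x) : σ = σ' :=
  Finpartition.ext_part fun x => Subset.antisymm
    (part_subset_of_forall_isBlockPred (fun _ _ => hσ.isBlockPred_of_isBlockPred hσ' hmin hmax) x)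
    (part_subset_of_forall_isBlockPred (fun _ _ => hσ'.isBlockPred_of_isBlockPred hσ
      (fun x => (hmin x).symm) (fun x => (hmax x).symm)) x)

end NonCrossing

section Refinement

variable {N : ℕ} {σ π : Finpartition (univ : Finset (Fin N))} {x : Fin N}

lemma Refines.part_subset (h : Refines σ π) (x : Fin N) : σ.part x ⊆ π.part x := by
  obtain ⟨C, hC, hsub⟩ := h (σ.part x) (σ.part_mem.2 (mem_univ x))
  rwa [π.part_eq_of_mem hC (hsub (self_mem_part σ x))]

lemma EvenPartition.not_isBlockMin_and_isBlockMax (h : EvenPartition σ) (x : Fin N) :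
    ¬ (IsBlockMin σ x ∧ IsBlockMax σ x) := by
  rintro ⟨hmin, hmax⟩
  have hx : σ.part x = {x} :=
    eq_singleton_iff_unique_mem.2
      ⟨self_mem_part σ x, fun y hy => le_antisymm (hmax y hy) (hmin y hy)⟩
  have := h _ (σ.part_mem.2 (mem_univ x))
  rw [hx, card_singleton] at this
  exact Nat.not_even_one this

lemma Refines.isBlockMin_iff (h : Refines σ π) (hσ : EvenPartition σ)
    (hx : x ∉ blockInterior π) :
    IsBlockMin σ x ↔ IsBlockMin π x := by
  refine ⟨fun hσx => ?_, fun hπx y hy => hπx y (h.part_subset x hy)⟩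
  by_contra hπx
  have hπx' : IsBlockMax π x := by_contra fun h' => hx ⟨hπx, h'⟩
  exact hσ.not_isBlockMin_and_isBlockMax x ⟨hσx, fun y hy => hπx' y (h.part_subset x hy)⟩

lemma Refines.isBlockMax_iff (h : Refines σ π) (hσ : EvenPartition σ)
    (hx : x ∉ blockInterior π) :
    IsBlockMax σ x ↔ IsBlockMax π x := by
  refine ⟨fun hσx => ?_, fun hπx y hy => hπx y (h.part_subset x hy)⟩
  by_contra hπx
  have hπx' : IsBlockMin π x := by_contra fun h' => hx ⟨h', hπx⟩
  exact hσ.not_isBlockMin_and_isBlockMax x ⟨fun y hy => hπx' y (h.part_subset x hy), hσx⟩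

theorem card_nonCrossing_even_refines_le (π : Finpartition (univ : Finset (Fin N))) :
    Nat.card {σ : Finpartition (univ : Finset (Fin N)) //
      NonCrossing σ ∧ EvenPartition σ ∧ Refines σ π} ≤ 4 ^ Nat.card (blockInterior π) := by
  let code (σ : {σ : Finpartition (univ : Finset (Fin N)) //
      NonCrossing σ ∧ EvenPartition σ ∧ Refines σ π}) (x : blockInterior π) : Prop × Prop :=
    (IsBlockMin σ.1 x, IsBlockMax σ.1 x)
  have hcode : Function.Injective code := by
    rintro ⟨σ, hσ, hσe, hσπ⟩ ⟨σ', hσ', hσe', hσ'π⟩ h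
    refine Subtype.ext (hσ.eq_of_isBlockMin_iff_of_isBlockMax_iff hσ' (fun x => ?_) (fun x => ?_))
    all_goals by_cases hx : x ∈ blockInterior π
    · exact Iff.of_eq (congrArg Prod.fst (congrFun h ⟨x, hx⟩))
    · exact (hσπ.isBlockMin_iff hσe hx).trans (hσ'π.isBlockMin_iff hσe' hx).symm
    · exact Iff.of_eq (congrArg Prod.snd (congrFun h ⟨x, hx⟩))
    · exact (hσπ.isBlockMax_iff hσe hx).trans (hσ'π.isBlockMax_iff hσe' hx).symm
  calc _ ≤ Nat.card (blockInterior π → Prop × Prop) :=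
        Nat.card_le_card_of_injective code hcode
    _ = 4 ^ Nat.card (blockInterior π) := by
      rw [Nat.card_fun, Nat.card_prod, Nat.card_eq_fintype_card, Fintype.card_prop]

end Refinement

section Segments

variable {d m : ℕ} {π : Finpartition (univ : Finset (Fin (2*d*m)))}

/-- `ε_d` is constant on the segment `[jd, (j+1)d)`, while it alternates along each block. -/
lemma Alternating.div_ne_of_mem_part (hπ : Alternating (epsd d m) π) {x y : Fin (2*d*m)}
    (hy : y ∈ π.part x) (hxy : x ≠ y) : (x : ℕ) / d ≠ (y : ℕ) / d := by
  wlog hlt : x < y generalizing x y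
  · exact (this (mem_part_comm.1 hy) hxy.symm (lt_of_le_of_ne (not_lt.1 hlt) hxy.symm)).symm
  intro hdiv
  obtain ⟨a, ha, b, hb, hab⟩ := List.IsChain.exists_rel_mem_Icc (sortedLT_sort _).pairwise
    (hπ _ (π.part_mem.2 (mem_univ x))) ((mem_sort _).2 (self_mem_part π x)) ((mem_sort _).2 hy)
    hlt
  have hseg : ∀ c ∈ Set.Icc x y, (c : ℕ) / d = (x : ℕ) / d := fun c hc =>
    le_antisymm (hdiv ▸ Nat.div_le_div_right hc.2) (Nat.div_le_div_right hc.1)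
  exact hab (by simp only [epsd, hseg a ha, hseg b hb])

lemma Alternating.div_lt_div_of_mem_part (hπ : Alternating (epsd d m) π) {x y : Fin (2*d*m)}
    (hy : y ∈ π.part x) (hxy : x < y) : (x : ℕ) / d < (y : ℕ) / d :=
  (Nat.div_le_div_right hxy.le).lt_of_ne (hπ.div_ne_of_mem_part hy hxy.ne)

/-- Two interior points `x < x'` in one segment would give `p' < x < x' < q` with `p' ∼ x'` and
`x ∼ q`; non-crossing then puts `x` and `x'` in one block. -/
lemma NonCrossing.injOn_div_blockInterior (hπNC : NonCrossing π)
    (hπ : Alternating (epsd d m) π) :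
    Set.InjOn (fun x : Fin (2*d*m) => (x : ℕ) / d) (blockInterior π) := by
  intro x hx x' hx' hdiv
  by_contra hne
  wlog hlt : x < x' generalizing x x'
  · exact this hx' hx hdiv.symm (Ne.symm hne) (lt_of_le_of_ne (not_lt.1 hlt) (Ne.symm hne))
  simp only at hdiv
  obtain ⟨p', hp', hp'x'⟩ := not_isBlockMin_iff.1 hx'.1
  obtain ⟨q, hq, hxq⟩ := not_isBlockMax_iff.1 hx.2
  have hp'x : p' < x := by
    have := hπ.div_lt_div_of_mem_part (mem_part_comm.1 hp') hp'x'
    exact not_le.1 fun h => (Nat.div_le_div_right (c := d) h).not_gt (by omega)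
  have hx'q : x' < q := by
    have := hπ.div_lt_div_of_mem_part hq hxq
    exact not_le.1 fun h => (Nat.div_le_div_right (c := d) h).not_gt (by omega)
  have hxx' := hπNC p' x x' q hp'x hlt hx'q (sameBlock_iff_mem_part.2 (mem_part_comm.1 hp'))
    (sameBlock_iff_mem_part.2 hq)
  rw [sameBlock_iff_mem_part, part_eq_of_mem_part hp'] at hxx'
  exact hπ.div_ne_of_mem_part hxx' (Ne.symm hne) hdiv.symm

lemma NonCrossing.card_blockInterior_le (hπNC : NonCrossing π)
    (hπ : Alternating (epsd d m) π) :
    Nat.card (blockInterior π) ≤ 2 * m := by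
  have hlt (x : Fin (2*d*m)) : (x : ℕ) / d < 2 * m :=
    Nat.div_lt_of_lt_mul (by rw [← mul_assoc, mul_comm d 2]; exact x.2)
  calc Nat.card (blockInterior π) ≤ Nat.card (Fin (2 * m)) :=
        Nat.card_le_card_of_injective (fun x => ⟨(x.1 : ℕ) / d, hlt x.1⟩) fun x y h =>
          Subtype.ext (hπNC.injOn_div_blockInterior hπ x.2 y.2 (congrArg Fin.val h))
    _ = 2 * m := Nat.card_fin _

end Segments

theorem card_epsPartitions_refining_le_general (d m : ℕ)
    (π : Finpartition (univ : Finset (Fin (2*d*m))))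
    (hπNC : NonCrossing π) (hπ : EpsPartition (epsd d m) π) :
    (Nat.card {σ : Finpartition (univ : Finset (Fin (2*d*m))) //
        NonCrossing σ ∧ EpsPartition (epsd d m) σ ∧ Refines σ π} : ℝ) ≤
      (3 * Real.exp 1) ^ (2*m) := by
  have hcard : Nat.card {σ : Finpartition (univ : Finset (Fin (2*d*m))) //
      NonCrossing σ ∧ EpsPartition (epsd d m) σ ∧ Refines σ π} ≤ 4 ^ (2 * m) :=
    calc Nat.card {σ : Finpartition (univ : Finset (Fin (2*d*m))) //
          NonCrossing σ ∧ EpsPartition (epsd d m) σ ∧ Refines σ π}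
        ≤ Nat.card {σ : Finpartition (univ : Finset (Fin (2*d*m))) //
          NonCrossing σ ∧ EvenPartition σ ∧ Refines σ π} :=
          Nat.card_le_card_of_injective (fun σ => ⟨σ.1, σ.2.1, σ.2.2.1.1, σ.2.2.2⟩)
            fun _ _ h => Subtype.ext (congrArg Subtype.val h :)
      _ ≤ 4 ^ Nat.card (blockInterior π) := card_nonCrossing_even_refines_le π
      _ ≤ 4 ^ (2 * m) := Nat.pow_le_pow_right (by norm_num) (hπNC.card_blockInterior_le hπ.2)
  calc (_ : ℝ) ≤ (4 : ℝ) ^ (2 * m) := by exact_mod_cast hcard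
    _ ≤ (3 * Real.exp 1) ^ (2 * m) :=
      pow_le_pow_left₀ (by norm_num) (by linarith [Real.add_one_le_exp (1 : ℝ)]) _

/-- second assertion of Lemma 3.6 of the paper: for a non-crossing
`ε_d`-partition `π` of `[2dm]`, the number of non-crossing `ε_d`-partitions `σ ≤ π`
is at most `(3e)^{2m}`. -/
theorem card_epsPartitions_refining_le (d m : ℕ) (hd : 1 ≤ d) (hm : 1 ≤ m)
    (π : Finpartition (univ : Finset (Fin (2*d*m))))
    (hπNC : NonCrossing π) (hπ : EpsPartition (epsd d m) π) :
    (Nat.card {σ : Finpartition (univ : Finset (Fin (2*d*m))) //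
        NonCrossing σ ∧ EpsPartition (epsd d m) σ ∧ Refines σ π} : ℝ) ≤
      (3 * Real.exp 1) ^ (2*m) :=
  card_epsPartitions_refining_le_general d m π hπNC hπ
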